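/- arXiv:2208.13624 — 4 statements merged into one kernel-verified Lean document; each statement's English description precedes it below -/
import Mathlib

section
/- Let d̂ be a balanced classifier with values in (0,1) and let d(θ,x) = p(θ,x)/(p(θ,x) + p(θ)p(x)) be the Bayes optimal classifier. Then E_{p(θ,x)}[d(θ,x)/d̂(θ,x)] ≥ 1, i.e. the expectation over the joint density of the ratio of the optimal classifier to the balanced classifier is at least 1. -/
open MeasureTheory Set

/-! Pointwise, `p² / g ≥ 2 p - g` for `g > 0`, since `(p - g)² ≥ 0`. With `p = p(θ,x)` and
`g = (p(θ,x) + p(θ)p(x)) d̂(θ,x)`, the integrand `p d / d̂` equals `p² / g`, and integrating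
gives `E_p[d / d̂] ≥ 2 ∫ p - ∫ g = 2 - 1 = 1` by normalisation and balance. -/

lemma two_mul_sub_le_sq_div {p g : ℝ} (hg : 0 < g) : 2 * p - g ≤ p ^ 2 / g := by
  rw [le_div_iff₀ hg]
  nlinarith [sq_nonneg (p - g)]

lemma two_mul_integral_sub_integral_le_integral_sq_div {α : Type*} [MeasurableSpace α]
    {μ : Measure α} {p g : α → ℝ} (hg : ∀ᵐ x ∂μ, 0 < g x) (hp : Integrable p μ)
    (hgi : Integrable g μ) (hpg : Integrable (fun x => p x ^ 2 / g x) μ) :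
    2 * ∫ x, p x ∂μ - ∫ x, g x ∂μ ≤ ∫ x, p x ^ 2 / g x ∂μ := by
  rw [← integral_const_mul, ← integral_sub (hp.const_mul 2) hgi]
  exact integral_mono_ae ((hp.const_mul 2).sub hgi) hpg
    (hg.mono fun x hx => two_mul_sub_le_sq_div hx)

theorem balanced_ratio_joint_ge_one_general {Θ X : Type*} [MeasurableSpace Θ] [MeasurableSpace X]
    (μ : Measure Θ) (ν : Measure X)
    (pJ : Θ × X → ℝ) (pT : Θ → ℝ) (pX : X → ℝ)
    (hpJ1 : ∫ z, pJ z ∂(μ.prod ν) = 1)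
    (hpos : ∀ z, 0 < pJ z + pT z.1 * pX z.2)
    (dhat : Θ × X → ℝ)
    (hd01 : ∀ z, dhat z ∈ Set.Ioo (0 : ℝ) 1)
    (hbal : ∫ z, (pJ z + pT z.1 * pX z.2) * dhat z ∂(μ.prod ν) = 1)
    (hint : Integrable
      (fun z => pJ z * ((pJ z / (pJ z + pT z.1 * pX z.2)) / dhat z)) (μ.prod ν)) :
    1 ≤ ∫ z, pJ z * ((pJ z / (pJ z + pT z.1 * pX z.2)) / dhat z) ∂(μ.prod ν) := by
  have hratio : (fun z => pJ z * ((pJ z / (pJ z + pT z.1 * pX z.2)) / dhat z)) =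
      fun z => pJ z ^ 2 / ((pJ z + pT z.1 * pX z.2) * dhat z) := by
    ext z
    have hd := (hd01 z).1.ne'
    have hs := (hpos z).ne'
    field_simp
  rw [hratio] at hint ⊢
  have hpJi := Integrable.of_integral_ne_zero (hpJ1 ▸ one_ne_zero)
  have hgi := Integrable.of_integral_ne_zero (hbal ▸ one_ne_zero)
  have hbound := two_mul_integral_sub_integral_le_integral_sq_div
    (.of_forall fun z => mul_pos (hpos z) (hd01 z).1) hpJi hgi hint
  rw [hpJ1, hbal] at hbound
  linarith

/-- For a balanced classifier `dhat` with values in (0,1) and the Bayes optimal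
classifier `d z = pJ z / (pJ z + pT z.1 * pX z.2)`, we have `E_{p(θ,x)}[d/dhat] ≥ 1`. -/
theorem balanced_ratio_joint_ge_one {Θ X : Type*} [MeasurableSpace Θ] [MeasurableSpace X]
    (μ : Measure Θ) (ν : Measure X) [SigmaFinite μ] [SigmaFinite ν]
    (pJ : Θ × X → ℝ) (pT : Θ → ℝ) (pX : X → ℝ)
    (hpJ : ∀ z, 0 ≤ pJ z) (hpJ1 : ∫ z, pJ z ∂(μ.prod ν) = 1)
    (hpT : ∀ θ, 0 ≤ pT θ) (hpX : ∀ x, 0 ≤ pX x)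
    (hmargT : ∀ θ, pT θ = ∫ x, pJ (θ, x) ∂ν)
    (hmargX : ∀ x, pX x = ∫ θ, pJ (θ, x) ∂μ)
    (hpos : ∀ z, 0 < pJ z + pT z.1 * pX z.2)
    (dhat : Θ × X → ℝ) (hdm : Measurable dhat)
    (hd01 : ∀ z, dhat z ∈ Set.Ioo (0 : ℝ) 1)
    (hbal : ∫ z, (pJ z + pT z.1 * pX z.2) * dhat z ∂(μ.prod ν) = 1)
    (hint : Integrable
      (fun z => pJ z * ((pJ z / (pJ z + pT z.1 * pX z.2)) / dhat z)) (μ.prod ν))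
    (hintlog : Integrable
      (fun z => pJ z * Real.log ((pJ z / (pJ z + pT z.1 * pX z.2)) / dhat z)) (μ.prod ν)) :
    1 ≤ ∫ z, pJ z * ((pJ z / (pJ z + pT z.1 * pX z.2)) / dhat z) ∂(μ.prod ν) :=
  balanced_ratio_joint_ge_one_general μ ν pJ pT pX hpJ1 hpos dhat hd01 hbal hint
end

section
/- Let d̂ be a balanced classifier with values in (0,1) and let d(θ,x) = p(θ,x)/(p(θ,x) + p(θ)p(x)). Then E_{p(θ)p(x)}[(1 − d(θ,x))/(1 − d̂(θ,x))] ≥ 1. -/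
/-!
With `q = p(θ)p(x)` and `s = (p(θ,x) + q)(1 − d̂)`, the integrand is `q² / s`, and the tangent-line
bound `q² / s ≥ 2q − s` holds pointwise. Since `q` and `p(θ,x)` are probability densities and `d̂`
is balanced, `∫ s = 2 − 1 = 1`, so the integral of the lower bound `2q − s` is `2 − 1 = 1`.
-/

open MeasureTheory

lemma two_mul_sub_le_sq_div_s2 {b s : ℝ} (hs : 0 < s) : 2 * b - s ≤ b ^ 2 / s := by
  rw [le_div_iff₀ hs]
  nlinarith [sq_nonneg (b - s)]

lemma two_mul_sub_le_mul_one_sub_div_div {a b t : ℝ} (hab : 0 < a + b) (ht : t < 1) :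
    2 * b - (a + b) * (1 - t) ≤ b * ((1 - a / (a + b)) / (1 - t)) := by
  have hs : 0 < (a + b) * (1 - t) := mul_pos hab (sub_pos.mpr ht)
  have hrhs : b * ((1 - a / (a + b)) / (1 - t)) = b ^ 2 / ((a + b) * (1 - t)) := by
    field_simp
    ring
  exact hrhs ▸ two_mul_sub_le_sq_div_s2 hs

lemma one_le_integral_of_two_mul_sub_le {α : Type*} [MeasurableSpace α] {m : Measure α}
    {p q d f : α → ℝ} (hp1 : ∫ z, p z ∂m = 1) (hq : Integrable q m) (hq1 : ∫ z, q z ∂m = 1)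
    (hbal : ∫ z, (p z + q z) * d z ∂m = 1) (hf : Integrable f m)
    (hle : ∀ z, 2 * q z - (p z + q z) * (1 - d z) ≤ f z) :
    1 ≤ ∫ z, f z ∂m := by
  have hp : Integrable p m := .of_integral_ne_zero (by simp [hp1])
  have hpd : Integrable (fun z => (p z + q z) * d z) m := .of_integral_ne_zero (by simp [hbal])
  have hqp : Integrable (fun z => q z - p z) m := hq.sub hp
  have hexpand : (fun z => 2 * q z - (p z + q z) * (1 - d z)) =
      fun z => q z - p z + (p z + q z) * d z := by
    funext z; ring
  have hlb : Integrable (fun z => 2 * q z - (p z + q z) * (1 - d z)) m := by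
    rw [hexpand]; exact hqp.add hpd
  calc (1 : ℝ) = ∫ z, 2 * q z - (p z + q z) * (1 - d z) ∂m := by
        rw [hexpand, integral_add hqp hpd, integral_sub hq hp, hq1, hp1, hbal]; norm_num
    _ ≤ ∫ z, f z ∂m := integral_mono hlb hf hle

section Marginals

variable {Θ X : Type*} [MeasurableSpace Θ] [MeasurableSpace X] {μ : Measure Θ} {ν : Measure X}
  [SFinite μ] [SFinite ν] {pJ : Θ × X → ℝ} {pT : Θ → ℝ} {pX : X → ℝ}

lemma integrable_mul_marginals (hpJ : Integrable pJ (μ.prod ν))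
    (hmargT : ∀ θ, pT θ = ∫ x, pJ (θ, x) ∂ν) (hmargX : ∀ x, pX x = ∫ θ, pJ (θ, x) ∂μ) :
    Integrable (fun z : Θ × X => pT z.1 * pX z.2) (μ.prod ν) := by
  rw [funext hmargT, funext hmargX]
  exact hpJ.integral_prod_left.mul_prod hpJ.integral_prod_right

lemma integral_mul_marginals (hpJ1 : ∫ z, pJ z ∂(μ.prod ν) = 1)
    (hmargT : ∀ θ, pT θ = ∫ x, pJ (θ, x) ∂ν) (hmargX : ∀ x, pX x = ∫ θ, pJ (θ, x) ∂μ) :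
    ∫ z, pT z.1 * pX z.2 ∂(μ.prod ν) = 1 := by
  have hpJ : Integrable pJ (μ.prod ν) := .of_integral_ne_zero (by simp [hpJ1])
  rw [integral_prod_mul, funext hmargT, funext hmargX, ← integral_prod _ hpJ,
    ← integral_prod_symm _ hpJ, hpJ1, one_mul]

end Marginals

theorem balanced_ratio_marginal_ge_one_general {Θ X : Type*} [MeasurableSpace Θ] [MeasurableSpace X]
    (μ : Measure Θ) (ν : Measure X) [SigmaFinite μ] [SigmaFinite ν]
    (pJ : Θ × X → ℝ) (pT : Θ → ℝ) (pX : X → ℝ)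
    (hpJ1 : ∫ z, pJ z ∂(μ.prod ν) = 1)
    (hmargT : ∀ θ, pT θ = ∫ x, pJ (θ, x) ∂ν)
    (hmargX : ∀ x, pX x = ∫ θ, pJ (θ, x) ∂μ)
    (hpos : ∀ z, 0 < pJ z + pT z.1 * pX z.2)
    (dhat : Θ × X → ℝ)
    (hd01 : ∀ z, dhat z ∈ Set.Ioo (0 : ℝ) 1)
    (hbal : ∫ z, (pJ z + pT z.1 * pX z.2) * dhat z ∂(μ.prod ν) = 1)
    (hint : Integrable
      (fun z => pT z.1 * pX z.2 *
        ((1 - pJ z / (pJ z + pT z.1 * pX z.2)) / (1 - dhat z))) (μ.prod ν)) :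
    1 ≤ ∫ z, pT z.1 * pX z.2 *
        ((1 - pJ z / (pJ z + pT z.1 * pX z.2)) / (1 - dhat z)) ∂(μ.prod ν) := by
  have hpJ : Integrable pJ (μ.prod ν) := .of_integral_ne_zero (by simp [hpJ1])
  exact one_le_integral_of_two_mul_sub_le hpJ1 (integrable_mul_marginals hpJ hmargT hmargX)
    (integral_mul_marginals hpJ1 hmargT hmargX) hbal hint
    fun z => two_mul_sub_le_mul_one_sub_div_div (hpos z) (hd01 z).2

/-- For a balanced classifier `dhat` with values in (0,1) and the Bayes optimal
classifier `d`, we have `E_{p(θ)p(x)}[(1 - d)/(1 - dhat)] ≥ 1`. -/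
theorem balanced_ratio_marginal_ge_one {Θ X : Type*} [MeasurableSpace Θ] [MeasurableSpace X]
    (μ : Measure Θ) (ν : Measure X) [SigmaFinite μ] [SigmaFinite ν]
    (pJ : Θ × X → ℝ) (pT : Θ → ℝ) (pX : X → ℝ)
    (hpJ : ∀ z, 0 ≤ pJ z) (hpJ1 : ∫ z, pJ z ∂(μ.prod ν) = 1)
    (hpT : ∀ θ, 0 ≤ pT θ) (hpX : ∀ x, 0 ≤ pX x)
    (hmargT : ∀ θ, pT θ = ∫ x, pJ (θ, x) ∂ν)
    (hmargX : ∀ x, pX x = ∫ θ, pJ (θ, x) ∂μ)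
    (hpos : ∀ z, 0 < pJ z + pT z.1 * pX z.2)
    (dhat : Θ × X → ℝ) (hdm : Measurable dhat)
    (hd01 : ∀ z, dhat z ∈ Set.Ioo (0 : ℝ) 1)
    (hbal : ∫ z, (pJ z + pT z.1 * pX z.2) * dhat z ∂(μ.prod ν) = 1)
    (hint : Integrable
      (fun z => pT z.1 * pX z.2 *
        ((1 - pJ z / (pJ z + pT z.1 * pX z.2)) / (1 - dhat z))) (μ.prod ν))
    (hintlog : Integrable
      (fun z => pT z.1 * pX z.2 *
        Real.log ((1 - pJ z / (pJ z + pT z.1 * pX z.2)) / (1 - dhat z))) (μ.prod ν)) :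
    1 ≤ ∫ z, pT z.1 * pX z.2 *
        ((1 - pJ z / (pJ z + pT z.1 * pX z.2)) / (1 - dhat z)) ∂(μ.prod ν) :=
  balanced_ratio_marginal_ge_one_general μ ν pJ pT pX hpJ1 hmargT hmargX hpos dhat hd01 hbal hint
end

section
/- If a classifier d̂ satisfies pointwise d̂(θ,x) ≤ d(θ,x) whenever p(θ|x) > p(θ), and d̂(θ,x) ≥ d(θ,x) whenever p(θ|x) < p(θ), then the induced surrogate posterior p̂(θ|x) = p(θ) · d̂(θ,x)/(1 − d̂(θ,x)) satisfies p̂(θ|x) ≤ p(θ|x) when p(θ|x) > p(θ), and p̂(θ|x) ≥ p(θ|x) when p(θ|x) < p(θ). -/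
/-- If pointwise `dhat ≤ d` whenever the posterior exceeds the prior and
`dhat ≥ d` whenever the posterior is below the prior, then the surrogate posterior
`p̂ = pT · dhat/(1-dhat)` satisfies `p̂ ≤ p(θ|x)` when `p(θ|x) > p(θ)` and `p̂ ≥ p(θ|x)` when
`p(θ|x) < p(θ)`, i.e. it lies between the prior and the exact posterior. -/
theorem surrogate_between_prior_and_posterior (pJ pT pX dhat : ℝ)
    (hJ : 0 < pJ) (hT : 0 < pT) (hX : 0 < pX)
    (hd01 : dhat ∈ Set.Ioo (0 : ℝ) 1)
    (h1 : pJ / pX > pT → dhat ≤ pJ / (pJ + pT * pX))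
    (h2 : pJ / pX < pT → pJ / (pJ + pT * pX) ≤ dhat) :
    (pJ / pX > pT → pT * (dhat / (1 - dhat)) ≤ pJ / pX) ∧
      (pJ / pX < pT → pJ / pX ≤ pT * (dhat / (1 - dhat))) := by
  obtain ⟨hd0, hd1⟩ := hd01
  have h1d : (0:ℝ) < 1 - dhat := by linarith
  have hden : (0:ℝ) < pJ + pT * pX := by positivity
  constructor
  · intro h
    have hd := h1 h
    have key : dhat * (pJ + pT * pX) ≤ pJ := (le_div_iff₀ hden).mp hd
    rw [← mul_div_assoc, div_le_div_iff₀ h1d hX]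
    nlinarith
  · intro h
    have hd := h2 h
    have key : pJ ≤ dhat * (pJ + pT * pX) := (div_le_iff₀ hden).mp hd
    rw [← mul_div_assoc, div_le_div_iff₀ hX h1d]
    nlinarith
end

section
/- For a balanced classifier d̂ with values in (0,1), combining Theorems 1 and 2: E_{p(θ,x)}[d/d̂] + E_{p(θ)p(x)}[(1−d)/(1−d̂)] ≥ 2, where d is the Bayes optimal classifier; equality holds when d̂ = d almost everywhere with respect to both measures. -/
/-!
Write `s = p(θ,x) + p(θ)p(x)`. For `w > 0`, `(a - w)² ≥ 0` gives `a²/w ≥ 2a - w`. Taking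
`a = p(θ,x)`, `w = s d̂`, the first expectation is `∫ a²/w ≥ 2 - 1`, since `p(θ,x)` is a density
and `d̂` is balanced; taking `a = p(θ)p(x)`, `w = s (1 - d̂)`, the second is `≥ 2 - (2 - 1)`.
If `d̂ = d`, then `w = a` wherever `a > 0`, so each integrand is `a` and each expectation is `1`.
-/

open MeasureTheory

lemma two_mul_sub_le_mul_div (a : ℝ) {b : ℝ} (hb : 0 < b) : 2 * a - b ≤ a * (a / b) := by
  rw [← mul_div_assoc, le_div_iff₀ hb]
  nlinarith [sq_nonneg (a - b)]

section

variable {α : Type*} [MeasurableSpace α] {π : Measure α} {a w : α → ℝ}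

lemma two_mul_integral_sub_integral_le_integral_mul_div (ha : Integrable a π)
    (hw : Integrable w π) (hw0 : ∀ z, 0 < w z)
    (haw : Integrable (fun z => a z * (a z / w z)) π) :
    2 * ∫ z, a z ∂π - ∫ z, w z ∂π ≤ ∫ z, a z * (a z / w z) ∂π := by
  rw [← integral_const_mul, ← integral_sub (ha.const_mul 2) hw]
  exact integral_mono ((ha.const_mul 2).sub hw) haw fun z => two_mul_sub_le_mul_div _ (hw0 z)

lemma integral_mul_div_eq_integral_of_ae_withDensity (ha0 : ∀ z, 0 ≤ a z)
    (ha : AEMeasurable a π)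
    (h : ∀ᵐ z ∂π.withDensity (fun z => ENNReal.ofReal (a z)), w z = a z) :
    ∫ z, a z * (a z / w z) ∂π = ∫ z, a z ∂π := by
  rw [ae_withDensity_iff' ha.ennreal_ofReal] at h
  refine integral_congr_ae (h.mono fun z hz => ?_)
  rcases (ha0 z).eq_or_lt with ha_zero | ha_pos
  · simp [← ha_zero]
  · simp only [hz (ENNReal.ofReal_pos.mpr ha_pos).ne', div_self ha_pos.ne', mul_one]

end

theorem balanced_combined_ge_two_general {Θ X : Type*} [MeasurableSpace Θ] [MeasurableSpace X]
    (μ : Measure Θ) (ν : Measure X) [SigmaFinite ν]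
    (pJ : Θ × X → ℝ) (pT : Θ → ℝ) (pX : X → ℝ)
    (hpJ : ∀ z, 0 ≤ pJ z) (hpJ1 : ∫ z, pJ z ∂(μ.prod ν) = 1)
    (hpT : ∀ θ, 0 ≤ pT θ) (hpX : ∀ x, 0 ≤ pX x)
    (hpM1 : ∫ z, pT z.1 * pX z.2 ∂(μ.prod ν) = 1)
    (hpos : ∀ z, 0 < pJ z + pT z.1 * pX z.2)
    (dhat : Θ × X → ℝ)
    (hd01 : ∀ z, dhat z ∈ Set.Ioo (0 : ℝ) 1)
    (hbal : ∫ z, (pJ z + pT z.1 * pX z.2) * dhat z ∂(μ.prod ν) = 1)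
    (hintJ : Integrable
      (fun z => pJ z * ((pJ z / (pJ z + pT z.1 * pX z.2)) / dhat z)) (μ.prod ν))
    (hintM : Integrable
      (fun z => pT z.1 * pX z.2 *
        ((1 - pJ z / (pJ z + pT z.1 * pX z.2)) / (1 - dhat z))) (μ.prod ν)) :
    (2 : ℝ) ≤ (∫ z, pJ z * ((pJ z / (pJ z + pT z.1 * pX z.2)) / dhat z) ∂(μ.prod ν))
        + ∫ z, pT z.1 * pX z.2 *
            ((1 - pJ z / (pJ z + pT z.1 * pX z.2)) / (1 - dhat z)) ∂(μ.prod ν) ∧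
      ((∀ᵐ z ∂((μ.prod ν).withDensity fun z => ENNReal.ofReal (pJ z)),
          dhat z = pJ z / (pJ z + pT z.1 * pX z.2)) →
        (∀ᵐ z ∂((μ.prod ν).withDensity fun z => ENNReal.ofReal (pT z.1 * pX z.2)),
          dhat z = pJ z / (pJ z + pT z.1 * pX z.2)) →
        (∫ z, pJ z * ((pJ z / (pJ z + pT z.1 * pX z.2)) / dhat z) ∂(μ.prod ν))
          + ∫ z, pT z.1 * pX z.2 *
              ((1 - pJ z / (pJ z + pT z.1 * pX z.2)) / (1 - dhat z)) ∂(μ.prod ν) = 2) := by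
  have hs0 z : pJ z + pT z.1 * pX z.2 ≠ 0 := (hpos z).ne'
  have hJ : Integrable pJ (μ.prod ν) := .of_integral_ne_zero (by simp [hpJ1])
  have hM : Integrable (fun z => pT z.1 * pX z.2) (μ.prod ν) :=
    .of_integral_ne_zero (by simp [hpM1])
  have hB : Integrable (fun z => (pJ z + pT z.1 * pX z.2) * dhat z) (μ.prod ν) :=
    .of_integral_ne_zero (by simp [hbal])
  have hS : Integrable (fun z => pJ z + pT z.1 * pX z.2) (μ.prod ν) := hJ.add hM
  have hB_compl : Integrable (fun z => (pJ z + pT z.1 * pX z.2) * (1 - dhat z)) (μ.prod ν) := by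
    simp only [mul_sub, mul_one]
    exact hS.sub hB
  have hbal_compl : ∫ z, (pJ z + pT z.1 * pX z.2) * (1 - dhat z) ∂(μ.prod ν) = 1 := by
    simp only [mul_sub, mul_one]
    rw [integral_sub hS hB, integral_add hJ hM, hpJ1, hpM1, hbal]
    norm_num
  have one_sub_d z : 1 - pJ z / (pJ z + pT z.1 * pX z.2) =
      pT z.1 * pX z.2 / (pJ z + pT z.1 * pX z.2) := by
    rw [one_sub_div (hs0 z), add_sub_cancel_left]
  simp only [one_sub_d, div_div] at hintJ hintM ⊢
  have geJ := two_mul_integral_sub_integral_le_integral_mul_div hJ hB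
    (fun z => mul_pos (hpos z) (hd01 z).1) hintJ
  have geM := two_mul_integral_sub_integral_le_integral_mul_div hM hB_compl
    (fun z => mul_pos (hpos z) (sub_pos.mpr (hd01 z).2)) hintM
  refine ⟨by linarith, fun hdJ hdM => ?_⟩
  rw [integral_mul_div_eq_integral_of_ae_withDensity hpJ hJ.aemeasurable
      (hdJ.mono fun z hz => by rw [hz, mul_div_cancel₀ _ (hs0 z)]),
    integral_mul_div_eq_integral_of_ae_withDensity (fun z => mul_nonneg (hpT _) (hpX _))
      hM.aemeasurable
      (hdM.mono fun z hz => by rw [hz, one_sub_d, mul_div_cancel₀ _ (hs0 z)]),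
    hpJ1, hpM1]
  norm_num

/-- For a balanced classifier `dhat` with values in (0,1) and the Bayes optimal
classifier `d z = pJ z / (pJ z + pT z.1 * pX z.2)`,
`E_{p(θ,x)}[d/dhat] + E_{p(θ)p(x)}[(1-d)/(1-dhat)] ≥ 2`, with equality when `dhat = d`
almost everywhere with respect to both weighted measures. -/
theorem balanced_combined_ge_two {Θ X : Type*} [MeasurableSpace Θ] [MeasurableSpace X]
    (μ : Measure Θ) (ν : Measure X) [SigmaFinite μ] [SigmaFinite ν]
    (pJ : Θ × X → ℝ) (pT : Θ → ℝ) (pX : X → ℝ)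
    (hpJ : ∀ z, 0 ≤ pJ z) (hpJ1 : ∫ z, pJ z ∂(μ.prod ν) = 1)
    (hpT : ∀ θ, 0 ≤ pT θ) (hpX : ∀ x, 0 ≤ pX x)
    (hpM1 : ∫ z, pT z.1 * pX z.2 ∂(μ.prod ν) = 1)
    (hpos : ∀ z, 0 < pJ z + pT z.1 * pX z.2)
    (dhat : Θ × X → ℝ) (hdm : Measurable dhat)
    (hd01 : ∀ z, dhat z ∈ Set.Ioo (0 : ℝ) 1)
    (hbal : ∫ z, (pJ z + pT z.1 * pX z.2) * dhat z ∂(μ.prod ν) = 1)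
    (hintJ : Integrable
      (fun z => pJ z * ((pJ z / (pJ z + pT z.1 * pX z.2)) / dhat z)) (μ.prod ν))
    (hintM : Integrable
      (fun z => pT z.1 * pX z.2 *
        ((1 - pJ z / (pJ z + pT z.1 * pX z.2)) / (1 - dhat z))) (μ.prod ν)) :
    (2 : ℝ) ≤ (∫ z, pJ z * ((pJ z / (pJ z + pT z.1 * pX z.2)) / dhat z) ∂(μ.prod ν))
        + ∫ z, pT z.1 * pX z.2 *
            ((1 - pJ z / (pJ z + pT z.1 * pX z.2)) / (1 - dhat z)) ∂(μ.prod ν) ∧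
      ((∀ᵐ z ∂((μ.prod ν).withDensity fun z => ENNReal.ofReal (pJ z)),
          dhat z = pJ z / (pJ z + pT z.1 * pX z.2)) →
        (∀ᵐ z ∂((μ.prod ν).withDensity fun z => ENNReal.ofReal (pT z.1 * pX z.2)),
          dhat z = pJ z / (pJ z + pT z.1 * pX z.2)) →
        (∫ z, pJ z * ((pJ z / (pJ z + pT z.1 * pX z.2)) / dhat z) ∂(μ.prod ν))
          + ∫ z, pT z.1 * pX z.2 *
              ((1 - pJ z / (pJ z + pT z.1 * pX z.2)) / (1 - dhat z)) ∂(μ.prod ν) = 2) :=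
  balanced_combined_ge_two_general μ ν pJ pT pX hpJ hpJ1 hpT hpX hpM1 hpos dhat hd01 hbal hintJ
    hintM
end
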